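/- The map π ↦ π̌, where 2π̌(k) = π²(2k), is a bijection from the set of π ∈ S_NC⁻(2p,2q) such that γ_{2p,2q}π⁻¹ separates the points of O = {1,3,…,2p+2q−1}, onto S_NC(p,q). Moreover a cycle of π of length 2m corresponds to a cycle of π̌ of length m. -/

import Mathlib

open Equiv Finset
open scoped Classical

noncomputable section

def numCycles {n : ℕ} (π : Equiv.Perm (Fin n)) : ℕ :=
  π.cycleType.card + (univ.filter fun x => π x = x).card

def plen {n : ℕ} (π : Equiv.Perm (Fin n)) : ℕ := n - numCycles π

def gammaPQ (p q : ℕ) : Equiv.Perm (Fin (p + q)) :=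
  finSumFinEquiv.permCongr (Equiv.sumCongr (finRotate p) (finRotate q))

def cycleLen {n : ℕ} (π : Equiv.Perm (Fin n)) (k : Fin n) : ℕ :=
  (univ.filter fun m => π.SameCycle k m).card

def Separates {n : ℕ} (σ : Equiv.Perm (Fin n)) (A : Finset (Fin n)) : Prop :=
  ∀ a ∈ A, ∀ b ∈ A, σ.SameCycle a b → a = b

def oddSet (n : ℕ) : Finset (Fin n) := univ.filter fun i => Odd (i.val + 1)

def IsSNC (p q : ℕ) (π : Equiv.Perm (Fin (p + q))) : Prop :=
  (∃ i j, π.SameCycle i j ∧ ¬ (gammaPQ p q).SameCycle i j) ∧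
    numCycles π + numCycles (gammaPQ p q * π⁻¹) = p + q

def SameParity {n : ℕ} (a b : Fin n) : Prop := (Odd (a.val + 1) ↔ Odd (b.val + 1))

def EvenCycles {n : ℕ} (π : Equiv.Perm (Fin n)) : Prop := ∀ k, Even (cycleLen π k)

def ParityReversing {n : ℕ} (π : Equiv.Perm (Fin n)) : Prop := ∀ k, ¬ SameParity k (π k)

def SNCminus (p q : ℕ) (π : Equiv.Perm (Fin (p + q))) : Prop :=
  IsSNC p q π ∧ EvenCycles π ∧ ParityReversing π

end

noncomputable def dbl {p q : ℕ} (k : Fin (p + q)) : Fin (2*p + 2*q) :=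
  ⟨2 * k.val + 1, by have := k.isLt; omega⟩

/-!
Write `γ = gammaPQ p q`. The inverse of `π ↦ π̌` is `σ ↦ π̂ := doublePerm γ σ`, which sends each
even point `dbl k` to the odd point `oddPt (γ k)` and each odd point `oddPt k` to
`dbl (σ (γ⁻¹ k))`. Then `π̂²` acts on the even points as `σ`, so a cycle of `σ` of length `m`
becomes a cycle of `π̂` of length `2m`; and `gammaPQ (2p) (2q)` is itself `doublePerm γ γ`, so
`γ_{2p,2q} π̂⁻¹` fixes every odd point and acts on the even points as `γ σ⁻¹`. Counting cycles as
`#(π) = ∑ₓ 1 / |cycle of x|` gives `#(π̂) = #(σ)` and `#(γ_{2p,2q} π̂⁻¹) = p + q + #(γ σ⁻¹)`, so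
`π̂ ∈ S_NC⁻(2p,2q)` exactly when `σ ∈ S_NC(p,q)`. Conversely, if `π` reverses parity and
`γ_{2p,2q} π⁻¹` separates the odd points, then `γ_{2p,2q} π⁻¹` maps the odd point `π (dbl k)` to
`oddPt (γ k)`, so these are equal and `π` is some `π̂`.
-/

namespace Equiv.Perm

variable {α β : Type*} [Fintype α] [DecidableEq α] [Fintype β] [DecidableEq β]

def orbitFinset (f : Perm α) (x : α) : Finset α := {y | f.SameCycle x y}

@[simp]
lemma mem_orbitFinset {f : Perm α} {x y : α} : y ∈ f.orbitFinset x ↔ f.SameCycle x y := by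
  simp [orbitFinset]

lemma orbitFinset_eq_iff {f : Perm α} {x y : α} :
    f.orbitFinset x = f.orbitFinset y ↔ f.SameCycle x y := by
  refine ⟨fun h => ?_, fun h => Finset.ext fun z => ?_⟩
  · have hy : y ∈ f.orbitFinset x := h ▸ mem_orbitFinset.2 (SameCycle.refl f y)
    exact mem_orbitFinset.1 hy
  · simp only [mem_orbitFinset]
    exact ⟨h.symm.trans, h.trans⟩

lemma orbitFinset_apply (f : Perm α) (x : α) : f.orbitFinset (f x) = f.orbitFinset x :=
  orbitFinset_eq_iff.2 (sameCycle_apply_left.2 (SameCycle.refl f x))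

lemma orbitFinset_of_isFixedPt {f : Perm α} {x : α} (h : f x = x) : f.orbitFinset x = {x} := by
  ext y
  rw [mem_orbitFinset, Finset.mem_singleton]
  exact ⟨fun hy => (hy.eq_of_left h).symm, fun hy => hy ▸ .refl f x⟩

lemma orbitFinset_of_mem_support {f : Perm α} {x : α} (h : x ∈ f.support) :
    f.orbitFinset x = (f.cycleOf x).support := by
  ext y
  rw [mem_orbitFinset, mem_support_cycleOf_iff' (mem_support.1 h)]

lemma image_support_orbitFinset (f : Perm α) :
    f.support.image f.orbitFinset = f.cycleFactorsFinset.image support := by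
  ext S
  simp only [Finset.mem_image]
  constructor
  · rintro ⟨x, hx, rfl⟩
    exact ⟨f.cycleOf x, cycleOf_mem_cycleFactorsFinset_iff.2 hx,
      (orbitFinset_of_mem_support hx).symm⟩
  · rintro ⟨c, hc, rfl⟩
    obtain ⟨a, ha⟩ := (mem_cycleFactorsFinset_iff.1 hc).1.nonempty_support
    have hca := cycle_is_cycleOf ha hc
    have haf : a ∈ f.support := mem_cycleFactorsFinset_support_le hc ha
    exact ⟨a, haf, by rw [orbitFinset_of_mem_support haf, hca]⟩

lemma card_image_support_cycleFactorsFinset (f : Perm α) :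
    #(f.cycleFactorsFinset.image support) = f.cycleType.card := by
  rw [cycleType_def, Multiset.card_map, ← Finset.card_def]
  refine Finset.card_image_of_injOn fun c hc d hd hcd => ?_
  obtain ⟨a, ha⟩ := (mem_cycleFactorsFinset_iff.1 hc).1.nonempty_support
  rw [cycle_is_cycleOf ha hc, cycle_is_cycleOf (hcd ▸ ha) hd]

lemma card_image_orbitFinset (f : Perm α) :
    #(univ.image f.orbitFinset) = f.cycleType.card + #{x | f x = x} := by
  have hsplit : univ.image f.orbitFinset =
      f.support.image f.orbitFinset ∪ ({x | f x = x} : Finset α).image f.orbitFinset := by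
    rw [← Finset.image_union]
    congr 1
    ext x
    simp [mem_support, em']
  have hdisj : _root_.Disjoint (f.support.image f.orbitFinset)
      (({x | f x = x} : Finset α).image f.orbitFinset) := by
    simp only [Finset.disjoint_left, Finset.mem_image, Finset.mem_filter, Finset.mem_univ,
      true_and, not_exists, not_and]
    rintro _ ⟨x, hx, rfl⟩ y hy hxy
    rw [orbitFinset_eq_iff] at hxy
    exact mem_support.1 hx (hxy.eq_of_left hy ▸ hy)
  have hfixed : #(({x | f x = x} : Finset α).image f.orbitFinset) = #{x | f x = x} := by
    refine Finset.card_image_of_injOn fun x hx y hy hxy => ?_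
    simp only [Finset.coe_filter, Finset.mem_univ, true_and] at hx hy
    simpa [orbitFinset_of_isFixedPt hx, orbitFinset_of_isFixedPt hy] using hxy
  rw [hsplit, Finset.card_union_of_disjoint hdisj, image_support_orbitFinset,
    card_image_support_cycleFactorsFinset, hfixed]

lemma card_image_orbitFinset_eq_sum (f : Perm α) :
    (#(univ.image f.orbitFinset) : ℚ) = ∑ x, (#(f.orbitFinset x) : ℚ)⁻¹ := by
  rw [Finset.card_eq_sum_ones, Nat.cast_sum, Nat.cast_one]
  refine Finset.sum_image' _ fun x _ => ?_
  have hfiber : ({y | f.orbitFinset y = f.orbitFinset x} : Finset α) = f.orbitFinset x := by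
    ext y
    simp [orbitFinset_eq_iff, sameCycle_comm]
  have hne : (#(f.orbitFinset x) : ℚ) ≠ 0 :=
    Nat.cast_ne_zero.2 (Finset.card_ne_zero.2 ⟨x, mem_orbitFinset.2 (.refl f x)⟩)
  rw [hfiber, Finset.sum_congr rfl fun y hy => by
    rw [orbitFinset_eq_iff.2 (mem_orbitFinset.1 hy).symm]]
  rw [Finset.sum_const, nsmul_eq_mul, mul_inv_cancel₀ hne]

lemma orbitFinset_of_semiconj {e : β → α} {f : Perm α} {g : Perm β}
    (h : Function.Semiconj e g f) (b : β) : f.orbitFinset (e b) = (g.orbitFinset b).image e := by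
  have hpow (n : ℕ) : (f ^ n) (e b) = e ((g ^ n) b) := by
    simpa only [← iterate_eq_pow] using ((h.iterate_right n) b).symm
  ext y
  simp only [mem_orbitFinset, Finset.mem_image]
  constructor
  · intro hy
    obtain ⟨n, rfl⟩ := hy.exists_nat_pow_eq
    exact ⟨(g ^ n) b, sameCycle_pow_right.2 (.refl g b), (hpow n).symm⟩
  · rintro ⟨z, hz, rfl⟩
    obtain ⟨n, rfl⟩ := hz.exists_nat_pow_eq
    exact ⟨n, by rw [zpow_natCast, hpow]⟩

lemma orbitFinset_eq_union_sq (f : Perm α) (x : α) :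
    f.orbitFinset x = (f ^ 2).orbitFinset x ∪ ((f ^ 2).orbitFinset x).image f := by
  ext y
  simp only [Finset.mem_union, Finset.mem_image, mem_orbitFinset]
  constructor
  · intro hy
    obtain ⟨n, rfl⟩ := hy.exists_nat_pow_eq
    obtain ⟨i, rfl | rfl⟩ := Nat.even_or_odd' n
    · exact .inl ⟨i, by rw [zpow_natCast, ← pow_mul]⟩
    · exact .inr ⟨(f ^ (2 * i)) x, ⟨i, by rw [zpow_natCast, ← pow_mul]⟩,
        by rw [pow_succ', mul_apply]⟩
  · rintro (hy | ⟨z, hz, rfl⟩)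
    · exact hy.of_pow
    · exact sameCycle_apply_right.2 hz.of_pow

end Equiv.Perm

open Equiv.Perm

lemma cycleLen_eq_card_orbitFinset {n : ℕ} (f : Perm (Fin n)) (x : Fin n) :
    cycleLen f x = #(f.orbitFinset x) := rfl

lemma numCycles_eq_sum_inv_cycleLen {n : ℕ} (f : Perm (Fin n)) :
    (numCycles f : ℚ) = ∑ x, (cycleLen f x : ℚ)⁻¹ := by
  rw [numCycles, ← card_image_orbitFinset, card_image_orbitFinset_eq_sum]
  rfl

lemma val_finRotate {n : ℕ} (i : Fin n) :
    (finRotate n i : ℕ) = if (i : ℕ) + 1 = n then 0 else (i : ℕ) + 1 := by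
  obtain ⟨m, rfl⟩ : ∃ m, n = m + 1 := Nat.exists_eq_add_one.2 (Nat.zero_lt_of_lt i.isLt)
  rw [coe_finRotate]
  simp [Fin.ext_iff]

lemma gammaPQ_val (p q : ℕ) (k : Fin (p + q)) :
    (gammaPQ p q k : ℕ) =
      if k + 1 = p then 0 else if k + 1 = p + q then p else k + 1 := by
  induction k using Fin.addCases with
  | left i =>
    simp only [gammaPQ, permCongr_apply, finSumFinEquiv_symm_apply_castAdd, Equiv.sumCongr_apply,
      Sum.map_inl, finSumFinEquiv_apply_left, Fin.val_castAdd, val_finRotate]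
    split_ifs <;> omega
  | right j =>
    simp only [gammaPQ, permCongr_apply, finSumFinEquiv_symm_apply_natAdd, Equiv.sumCongr_apply,
      Sum.map_inr, finSumFinEquiv_apply_right, Fin.val_natAdd, val_finRotate]
    split_ifs <;> omega

section Interleave

variable {p q : ℕ}

/-- The paper's odd point `2k+1`, at index `2k` since `Fin` counts from `0`; `dbl k` is the even
point `2k+2`. -/
def oddPt (k : Fin (p + q)) : Fin (2 * p + 2 * q) := ⟨2 * k, by omega⟩

@[simp] lemma val_oddPt (k : Fin (p + q)) : (oddPt k : ℕ) = 2 * k := rfl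

@[simp] lemma val_dbl (k : Fin (p + q)) : (dbl k : ℕ) = 2 * k + 1 := rfl

lemma oddPt_injective : Function.Injective (oddPt (p := p) (q := q)) :=
  fun a b h => Fin.ext (by simpa using congrArg Fin.val h)

lemma dbl_injective : Function.Injective (dbl (p := p) (q := q)) :=
  fun a b h => Fin.ext (by simpa using congrArg Fin.val h)

lemma oddPt_ne_dbl (a b : Fin (p + q)) : oddPt a ≠ dbl b :=
  fun h => by simpa using congrArg (Fin.val · % 2) h

noncomputable def interleave : Fin (p + q) ⊕ Fin (p + q) ≃ Fin (2 * p + 2 * q) :=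
  Equiv.ofBijective (Sum.elim oddPt dbl) <| (Fintype.bijective_iff_surjective_and_card _).2
    ⟨fun x => by
      obtain ⟨k, hk | hk⟩ := Nat.even_or_odd' x
      · exact ⟨.inl ⟨k, by omega⟩, Fin.ext hk.symm⟩
      · exact ⟨.inr ⟨k, by omega⟩, Fin.ext hk.symm⟩,
     by simp; ring⟩

@[simp] lemma interleave_inl (k : Fin (p + q)) : interleave (.inl k) = oddPt k := rfl

@[simp] lemma interleave_inr (k : Fin (p + q)) : interleave (.inr k) = dbl k := rfl

@[simp] lemma interleave_symm_oddPt (k : Fin (p + q)) : interleave.symm (oddPt k) = .inl k :=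
  interleave.symm_apply_eq.2 rfl

@[simp] lemma interleave_symm_dbl (k : Fin (p + q)) : interleave.symm (dbl k) = .inr k :=
  interleave.symm_apply_eq.2 rfl

@[elab_as_elim]
lemma oddPt_dbl_cases {motive : Fin (2 * p + 2 * q) → Prop} (oddPt : ∀ k, motive (oddPt k))
    (dbl : ∀ k, motive (dbl k)) (x : Fin (2 * p + 2 * q)) : motive x := by
  obtain ⟨k | k, rfl⟩ := interleave.surjective x
  exacts [oddPt k, dbl k]

lemma sum_oddPt_add_sum_dbl {M : Type*} [AddCommMonoid M] (F : Fin (2 * p + 2 * q) → M) :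
    ∑ x, F x = ∑ k, F (oddPt k) + ∑ k, F (dbl k) := by
  rw [← interleave.sum_comp, Fintype.sum_sum_type]
  rfl

lemma oddPt_mem_oddSet (k : Fin (p + q)) : oddPt k ∈ oddSet (2 * p + 2 * q) := by
  simp [oddSet]

lemma dbl_not_mem_oddSet (k : Fin (p + q)) : dbl k ∉ oddSet (2 * p + 2 * q) := by
  simp [oddSet, Nat.odd_iff]
  omega

lemma not_sameParity_oddPt_dbl (a b : Fin (p + q)) : ¬ SameParity (oddPt a) (dbl b) := by
  simp [SameParity, Nat.odd_iff]
  omega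

end Interleave

section DoublePerm

variable {p q : ℕ}

noncomputable def doublePerm (τ σ : Perm (Fin (p + q))) : Perm (Fin (2 * p + 2 * q)) :=
  interleave.permCongr ((Equiv.sumCongr (σ * τ⁻¹) τ).trans (Equiv.sumComm _ _))

variable (τ σ ρ : Perm (Fin (p + q))) (k : Fin (p + q))

@[simp] lemma doublePerm_oddPt : doublePerm τ σ (oddPt k) = dbl (σ (τ⁻¹ k)) := by
  simp [doublePerm]

@[simp] lemma doublePerm_dbl : doublePerm τ σ (dbl k) = oddPt (τ k) := by
  simp [doublePerm]

lemma doublePerm_injective : Function.Injective (doublePerm τ) := fun σ σ' h =>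
  Equiv.ext fun k => dbl_injective <| by
    simpa using congrArg (fun π : Perm _ => π (oddPt (τ k))) h

lemma doublePerm_sq_dbl : (doublePerm τ σ ^ 2) (dbl k) = dbl (σ k) := by
  simp [sq]

@[simp] lemma doublePerm_inv_oddPt : (doublePerm τ σ)⁻¹ (oddPt k) = dbl (τ⁻¹ k) := by
  rw [inv_eq_iff_eq]
  simp

@[simp] lemma doublePerm_inv_dbl : (doublePerm τ σ)⁻¹ (dbl k) = oddPt (τ (σ⁻¹ k)) := by
  rw [inv_eq_iff_eq]
  simp

lemma doublePerm_mul_inv_oddPt :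
    (doublePerm τ ρ * (doublePerm τ σ)⁻¹) (oddPt k) = oddPt k := by
  rw [mul_apply, doublePerm_inv_oddPt, doublePerm_dbl, Perm.coe_inv, apply_symm_apply]

lemma doublePerm_mul_inv_dbl :
    (doublePerm τ ρ * (doublePerm τ σ)⁻¹) (dbl k) = dbl ((ρ * σ⁻¹) k) := by
  rw [mul_apply, doublePerm_inv_dbl, doublePerm_oddPt, Perm.coe_inv, symm_apply_apply, mul_apply]

lemma gammaPQ_two_mul : gammaPQ (2 * p) (2 * q) = doublePerm (gammaPQ p q) (gammaPQ p q) := by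
  refine Equiv.ext fun x => Fin.ext ?_
  induction x using oddPt_dbl_cases with
  | oddPt k =>
    rw [doublePerm_oddPt, Perm.coe_inv, apply_symm_apply, gammaPQ_val, val_oddPt, val_dbl]
    split_ifs <;> omega
  | dbl k =>
    rw [doublePerm_dbl, gammaPQ_val, val_oddPt, val_dbl, gammaPQ_val]
    have := k.isLt
    split_ifs <;> omega

end DoublePerm

section Cycles

variable {p q : ℕ} (τ σ ρ : Perm (Fin (p + q)))

lemma orbitFinset_doublePerm_dbl (k : Fin (p + q)) :
    (doublePerm τ σ).orbitFinset (dbl k) =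
      (σ.orbitFinset k).image dbl ∪ (σ.orbitFinset k).image (oddPt ∘ τ) := by
  have hsq : Function.Semiconj dbl σ ⇑(doublePerm τ σ ^ 2) := fun k =>
    (doublePerm_sq_dbl τ σ k).symm
  rw [orbitFinset_eq_union_sq, orbitFinset_of_semiconj hsq, Finset.image_image]
  congr 2
  funext k
  simp

lemma sameCycle_doublePerm_dbl (i j : Fin (p + q)) :
    (doublePerm τ σ).SameCycle (dbl i) (dbl j) ↔ σ.SameCycle i j := by
  rw [← mem_orbitFinset, orbitFinset_doublePerm_dbl]
  simp [dbl_injective.eq_iff, oddPt_ne_dbl]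

lemma cycleLen_doublePerm_dbl (k : Fin (p + q)) :
    cycleLen (doublePerm τ σ) (dbl k) = 2 * cycleLen σ k := by
  have hdisj : Disjoint ((σ.orbitFinset k).image dbl) ((σ.orbitFinset k).image (oddPt ∘ τ)) := by
    simp [Finset.disjoint_left, oddPt_ne_dbl]
  rw [cycleLen_eq_card_orbitFinset, orbitFinset_doublePerm_dbl,
    Finset.card_union_of_disjoint hdisj, Finset.card_image_of_injective _ dbl_injective,
    Finset.card_image_of_injective _ (oddPt_injective.comp τ.injective), two_mul]
  rfl

lemma cycleLen_doublePerm_oddPt (k : Fin (p + q)) :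
    cycleLen (doublePerm τ σ) (oddPt k) = 2 * cycleLen σ (τ⁻¹ k) := by
  have hk : oddPt k = doublePerm τ σ (dbl (τ⁻¹ k)) := by simp
  rw [hk, cycleLen_eq_card_orbitFinset, orbitFinset_apply, ← cycleLen_eq_card_orbitFinset,
    cycleLen_doublePerm_dbl]

lemma numCycles_doublePerm : numCycles (doublePerm τ σ) = numCycles σ := by
  have h : (numCycles (doublePerm τ σ) : ℚ) = numCycles σ := by
    rw [numCycles_eq_sum_inv_cycleLen, numCycles_eq_sum_inv_cycleLen, sum_oddPt_add_sum_dbl]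
    simp only [cycleLen_doublePerm_oddPt, cycleLen_doublePerm_dbl]
    rw [Equiv.sum_comp τ⁻¹ fun k => ((2 * cycleLen σ k : ℕ) : ℚ)⁻¹, ← two_mul, Finset.mul_sum]
    refine Finset.sum_congr rfl fun k _ => ?_
    push_cast
    rw [mul_inv, ← mul_assoc, mul_inv_cancel₀ two_ne_zero, one_mul]
  exact_mod_cast h

lemma numCycles_doublePerm_mul_inv :
    numCycles (doublePerm τ ρ * (doublePerm τ σ)⁻¹) = p + q + numCycles (ρ * σ⁻¹) := by
  have hsemi : Function.Semiconj dbl ⇑(ρ * σ⁻¹) ⇑(doublePerm τ ρ * (doublePerm τ σ)⁻¹) :=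
    fun k => (doublePerm_mul_inv_dbl τ σ ρ k).symm
  have h : (numCycles (doublePerm τ ρ * (doublePerm τ σ)⁻¹) : ℚ) =
      p + q + numCycles (ρ * σ⁻¹) := by
    rw [numCycles_eq_sum_inv_cycleLen, numCycles_eq_sum_inv_cycleLen, sum_oddPt_add_sum_dbl]
    simp only [cycleLen_eq_card_orbitFinset, orbitFinset_of_semiconj hsemi,
      Finset.card_image_of_injective _ dbl_injective,
      orbitFinset_of_isFixedPt (doublePerm_mul_inv_oddPt τ σ ρ _), Finset.card_singleton]
    simp
  exact_mod_cast h

lemma exists_sameCycle_doublePerm_dbl (x : Fin (2 * p + 2 * q)) :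
    ∃ k, ∀ σ, (doublePerm τ σ).SameCycle (dbl k) x := by
  induction x using oddPt_dbl_cases with
  | oddPt k => exact ⟨τ⁻¹ k, fun σ => ⟨1, by simp⟩⟩
  | dbl k => exact ⟨k, fun σ => .refl _ _⟩

lemma exists_sameCycle_not_sameCycle_doublePerm_iff :
    (∃ x y, (doublePerm τ σ).SameCycle x y ∧ ¬ (doublePerm τ ρ).SameCycle x y) ↔
      ∃ i j, σ.SameCycle i j ∧ ¬ ρ.SameCycle i j := by
  constructor
  · rintro ⟨x, y, hσ, hρ⟩
    obtain ⟨i, hi⟩ := exists_sameCycle_doublePerm_dbl τ x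
    obtain ⟨j, hj⟩ := exists_sameCycle_doublePerm_dbl τ y
    refine ⟨i, j, ?_, fun h => hρ ?_⟩
    · exact (sameCycle_doublePerm_dbl τ σ i j).1 ((hi σ).trans (hσ.trans (hj σ).symm))
    · exact ((hi ρ).symm.trans ((sameCycle_doublePerm_dbl τ ρ i j).2 h)).trans (hj ρ)
  · rintro ⟨i, j, hσ, hρ⟩
    exact ⟨dbl i, dbl j, (sameCycle_doublePerm_dbl τ σ i j).2 hσ,
      (sameCycle_doublePerm_dbl τ ρ i j).not.2 hρ⟩

end Cycles

section Characterization

variable {p q : ℕ}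

lemma parityReversing_doublePerm (τ σ : Perm (Fin (p + q))) :
    ParityReversing (doublePerm τ σ) := by
  intro x
  induction x using oddPt_dbl_cases with
  | oddPt k => rw [doublePerm_oddPt]; exact not_sameParity_oddPt_dbl _ _
  | dbl k => rw [doublePerm_dbl]; exact fun h => not_sameParity_oddPt_dbl _ _ h.symm

lemma evenCycles_doublePerm (τ σ : Perm (Fin (p + q))) : EvenCycles (doublePerm τ σ) := by
  intro x
  induction x using oddPt_dbl_cases with
  | oddPt k => exact cycleLen_doublePerm_oddPt τ σ k ▸ even_two_mul _
  | dbl k => exact cycleLen_doublePerm_dbl τ σ k ▸ even_two_mul _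

lemma separates_doublePerm_mul_inv (τ σ ρ : Perm (Fin (p + q))) :
    Separates (doublePerm τ ρ * (doublePerm τ σ)⁻¹) (oddSet (2 * p + 2 * q)) := by
  intro a ha b _ hab
  induction a using oddPt_dbl_cases with
  | oddPt k => exact hab.eq_of_left (doublePerm_mul_inv_oddPt τ σ ρ k)
  | dbl k => exact absurd ha (dbl_not_mem_oddSet k)

lemma ParityReversing.exists_apply_oddPt {π : Perm (Fin (2 * p + 2 * q))}
    (hπ : ParityReversing π) (k : Fin (p + q)) : ∃ m, π (oddPt k) = dbl m := by
  obtain ⟨m | m, hm⟩ := interleave.surjective (π (oddPt k))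
  · have := hπ (oddPt k)
    simp only [← hm, interleave_inl, SameParity, val_oddPt, Nat.odd_iff] at this
    omega
  · exact ⟨m, hm.symm⟩

lemma ParityReversing.exists_apply_dbl {π : Perm (Fin (2 * p + 2 * q))}
    (hπ : ParityReversing π) (k : Fin (p + q)) : ∃ m, π (dbl k) = oddPt m := by
  obtain ⟨m | m, hm⟩ := interleave.surjective (π (dbl k))
  · exact ⟨m, hm.symm⟩
  · have := hπ (dbl k)
    simp only [← hm, interleave_inr, SameParity, val_dbl, Nat.odd_iff] at this
    omega

lemma exists_eq_doublePerm {τ : Perm (Fin (p + q))} {π : Perm (Fin (2 * p + 2 * q))}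
    (hπ : ParityReversing π) (hsep : Separates (doublePerm τ τ * π⁻¹) (oddSet (2 * p + 2 * q))) :
    ∃ σ, π = doublePerm τ σ := by
  choose f hf using hπ.exists_apply_oddPt
  have hf_inj : Function.Injective f := fun a b hab =>
    oddPt_injective (π.injective (by rw [hf, hf, hab]))
  refine ⟨Equiv.ofBijective f hf_inj.bijective_of_finite * τ, Equiv.ext fun x => ?_⟩
  induction x using oddPt_dbl_cases with
  | oddPt k => simp [hf]
  | dbl k =>
    obtain ⟨m, hm⟩ := hπ.exists_apply_dbl k
    have hstep : (doublePerm τ τ * π⁻¹) (oddPt m) = oddPt (τ k) := by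
      rw [mul_apply, ← hm, Perm.coe_inv, symm_apply_apply, doublePerm_dbl]
    rw [hm, doublePerm_dbl, hsep _ (oddPt_mem_oddSet m) _ (oddPt_mem_oddSet (τ k))
      (hstep ▸ sameCycle_apply_right.2 (.refl _ _))]

lemma isSNC_doublePerm_iff (σ : Perm (Fin (p + q))) :
    IsSNC (2 * p) (2 * q) (doublePerm (gammaPQ p q) σ) ↔ IsSNC p q σ := by
  rw [IsSNC, IsSNC, gammaPQ_two_mul, exists_sameCycle_not_sameCycle_doublePerm_iff,
    numCycles_doublePerm, numCycles_doublePerm_mul_inv]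
  exact and_congr_right' (by omega)

end Characterization

noncomputable def doubleSNC (p q : ℕ) :
    {σ : Perm (Fin (p + q)) // IsSNC p q σ} →
      {π : Perm (Fin (2 * p + 2 * q)) // SNCminus (2 * p) (2 * q) π ∧
        Separates (gammaPQ (2 * p) (2 * q) * π⁻¹) (oddSet (2 * p + 2 * q))} :=
  fun σ => ⟨doublePerm (gammaPQ p q) σ.1,
    ⟨(isSNC_doublePerm_iff σ.1).2 σ.2, evenCycles_doublePerm _ _, parityReversing_doublePerm _ _⟩,
    by rw [gammaPQ_two_mul]; exact separates_doublePerm_mul_inv _ _ _⟩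

lemma doubleSNC_bijective (p q : ℕ) : Function.Bijective (doubleSNC p q) := by
  refine ⟨fun σ σ' h => Subtype.ext (doublePerm_injective _ (congrArg Subtype.val h)), ?_⟩
  rintro ⟨π, ⟨hsnc, -, hπ⟩, hsep⟩
  rw [gammaPQ_two_mul] at hsep
  obtain ⟨σ, rfl⟩ := exists_eq_doublePerm hπ hsep
  exact ⟨⟨σ, (isSNC_doublePerm_iff σ).1 hsnc⟩, rfl⟩

theorem stmt9 (p q : ℕ) :
    ∃ F : {π : Equiv.Perm (Fin (2*p + 2*q)) //
            SNCminus (2*p) (2*q) π ∧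
            Separates (gammaPQ (2*p) (2*q) * π⁻¹) (oddSet (2*p + 2*q))} →
          {σ : Equiv.Perm (Fin (p + q)) // IsSNC p q σ},
      Function.Bijective F ∧
      (∀ π, ∀ k : Fin (p + q), (π.val ^ 2) (dbl k) = dbl ((F π).val k)) ∧
      (∀ π, ∀ k : Fin (p + q), cycleLen π.val (dbl k) = 2 * cycleLen (F π).val k) := by
  let e := Equiv.ofBijective _ (doubleSNC_bijective p q)
  have he π : π.val = doublePerm (gammaPQ p q) (e.symm π).val :=
    congrArg Subtype.val (e.apply_symm_apply π).symm
  refine ⟨e.symm, e.symm.bijective, fun π k => ?_, fun π k => ?_⟩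
  · rw [he π, doublePerm_sq_dbl]
  · rw [he π, cycleLen_doublePerm_dbl]
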